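/- arXiv:1212.3347 — 3 statements merged into one kernel-verified Lean document; each statement's English description precedes it below -/
import Mathlib

section
/- In ZMod n, every unit is an involution (u^2 = 1) if and only if n divides 24. -/
theorem stmt_2 (n : ℕ) (hn : 0 < n) :
    (∀ u : (ZMod n)ˣ, (u : ZMod n) ^ 2 = 1) ↔ n ∣ 24 := by
  constructor
  · intro h
    by_cases h5 : (5 : ℕ) ∣ n
    · exfalso
      haveI : NeZero n := ⟨hn.ne'⟩
      obtain ⟨u, hu⟩ := ZMod.unitsMap_surjective h5 (ZMod.unitOfCoprime 2 (by decide))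
      have h2 := h u
      have : ((ZMod.unitsMap h5 u : (ZMod 5)ˣ) : ZMod 5) ^ 2 = 1 := by
        rw [← Units.coeHom_apply, ← map_pow]
        have : u ^ 2 = 1 := Units.ext (by simpa using h2)
        rw [← map_pow, this]
        simp
      rw [hu] at this
      simp [ZMod.coe_unitOfCoprime] at this
      revert this; decide
    · have hc : Nat.Coprime 5 n := (Nat.Prime.coprime_iff_not_dvd (by norm_num)).mpr h5
      have h2 := h (ZMod.unitOfCoprime 5 hc)
      rw [ZMod.coe_unitOfCoprime] at h2
      have h24 : ((24 : ℕ) : ZMod n) = 0 := by push_cast; linear_combination h2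
      exact (ZMod.natCast_eq_zero_iff 24 n).mp h24
  · intro h
    have hle : n ≤ 24 := Nat.le_of_dvd (by norm_num) h
    interval_cases n <;> revert h <;> decide
end

section
/- For any positive integer n, every unit of the polynomial ring (ZMod n)[X] is an involution if and only if n divides 12. -/
/-!
A unit of `R[X]` is `c + q` with `c` a unit of `R` and `q` nilpotent, and
`(c + q) ^ 2 = c ^ 2 + 2 c q + q ^ 2`. Hence all units of `R[X]` are involutions exactly when
those of `R` are and every nilpotent `x ∈ R` satisfies `x ^ 2 = 0 = 2 x` (test on `1 + x X`).

For `R = ZMod n` with `n ∣ 12`, both conditions follow from the identity `x ^ 4 = x ^ 2`, which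
holds in `ZMod 12`. Conversely, `5 ∤ n` because the unit `2` of `ZMod 5` would lift to an
involution of `ZMod n`; so `5` is a unit of `ZMod n` and `n ∣ 5 ^ 2 - 1 = 24`. Finally `8 ∤ n`,
since `n / 4` is nilpotent in `ZMod n` but `2 * (n / 4) ≠ 0`.
-/

open Polynomial

lemma sq_eq_one_of_forall_pow_four_eq_sq {R : Type*} [CommRing R]
    (h : ∀ x : R, x ^ 4 = x ^ 2) (u : Rˣ) : (u : R) ^ 2 = 1 := by
  have h4 := h u
  rw [show (u : R) ^ 4 = (u : R) ^ 2 * (u : R) ^ 2 by ring] at h4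
  exact (Units.isUnit u).pow 2 |>.mul_eq_right.mp h4

lemma sq_eq_zero_and_two_mul_eq_zero_of_forall_pow_four_eq_sq {R : Type*} [CommRing R]
    (h : ∀ x : R, x ^ 4 = x ^ 2) {x : R} (hx : IsNilpotent x) : x ^ 2 = 0 ∧ 2 * x = 0 := by
  have hx2 : x ^ 2 = 0 := by
    refine IsIdempotentElem.eq_zero_of_isNilpotent ?_ (hx.pow_of_pos two_ne_zero)
    rw [IsIdempotentElem, ← pow_add, h]
  refine ⟨hx2, ?_⟩
  linear_combination h (1 + x) - (5 + 4 * x + x ^ 2) * hx2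

lemma Polynomial.sq_eq_zero_and_two_mul_eq_zero_of_isNilpotent {R : Type*} [CommRing R]
    (hR : ∀ x : R, IsNilpotent x → x ^ 2 = 0 ∧ 2 * x = 0) {f : R[X]} (hf : IsNilpotent f) :
    f ^ 2 = 0 ∧ 2 * f = 0 := by
  rw [as_sum_support f]
  refine Finset.sum_induction _ (fun g : R[X] ↦ g ^ 2 = 0 ∧ 2 * g = 0) ?_ ?_ ?_
  · rintro g g' ⟨hg, hg2⟩ ⟨hg', hg2'⟩
    exact ⟨by linear_combination hg + hg' + g' * hg2, by linear_combination hg2 + hg2'⟩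
  · simp
  · intro i _
    obtain ⟨hsq, htwo⟩ := hR _ (Polynomial.isNilpotent_iff.mp hf i)
    refine ⟨by rw [monomial_pow, hsq, monomial_zero_right], ?_⟩
    rw [← map_ofNat C, C_mul_monomial, htwo, monomial_zero_right]

lemma Polynomial.forall_units_sq_eq_one_iff {R : Type*} [CommRing R] :
    (∀ u : R[X]ˣ, (u : R[X]) ^ 2 = 1) ↔
      (∀ u : Rˣ, (u : R) ^ 2 = 1) ∧ ∀ x : R, IsNilpotent x → x ^ 2 = 0 ∧ 2 * x = 0 := by
  constructor
  · intro h
    refine ⟨fun u ↦ C_injective ?_, fun x hx ↦ ?_⟩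
    · simpa using h (Units.map C.toMonoidHom u)
    · have hu : IsUnit (1 + C x * X) :=
        ((Commute.all _ _).isNilpotent_mul_right (isNilpotent_C_iff.mpr hx)).isUnit_one_add
      have hsq : 1 + C (2 * x) * X + C (x ^ 2) * X ^ 2 = 1 := by
        have hu2 : (1 + C x * X) ^ 2 = 1 := hu.unit_spec ▸ h hu.unit
        simp only [map_mul, map_pow, map_ofNat]
        linear_combination hu2
      have hcoeff (k : ℕ) := congrArg (coeff · k) hsq
      simp only [coeff_add, coeff_one, coeff_C_mul_X, coeff_C_mul_X_pow] at hcoeff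
      exact ⟨by simpa using hcoeff 2, by simpa using hcoeff 1⟩
  · rintro ⟨hU, hN⟩ u
    have hu := u.isUnit
    rw [← X_mul_divX_add (u : R[X]), add_comm] at hu
    obtain ⟨hc, hf⟩ := isUnit_C_add_X_mul_iff.mp hu
    obtain ⟨hf2, htwo⟩ := sq_eq_zero_and_two_mul_eq_zero_of_isNilpotent hN hf
    have hc2 : C ((u : R[X]).coeff 0) ^ 2 = 1 := by rw [← map_pow, ← hc.unit_spec, hU, map_one]
    rw [← X_mul_divX_add (u : R[X])]
    linear_combination X ^ 2 * hf2 + X * C ((u : R[X]).coeff 0) * htwo + hc2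

lemma ZMod.pow_four_eq_sq_of_dvd_twelve {n : ℕ} (h : n ∣ 12) (x : ZMod n) : x ^ 4 = x ^ 2 := by
  obtain ⟨y, rfl⟩ := ZMod.castHom_surjective h x
  rw [← map_pow, ← map_pow, (by decide : ∀ y : ZMod 12, y ^ 4 = y ^ 2) y]

lemma ZMod.dvd_twentyFour_of_forall_units_sq_eq_one {n : ℕ} [NeZero n]
    (h : ∀ u : (ZMod n)ˣ, (u : ZMod n) ^ 2 = 1) : n ∣ 24 := by
  have h5 : ¬ 5 ∣ n := by
    intro h5
    obtain ⟨v, hv⟩ := ZMod.unitsMap_surjective h5 (ZMod.unitOfCoprime 2 (by norm_num))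
    have hv2 : ((v : ZMod n).cast : ZMod 5) = 2 := by rw [← ZMod.unitsMap_val h5, hv]; rfl
    have := congrArg (ZMod.castHom h5 (ZMod 5)) (h v)
    rw [map_pow, map_one, ZMod.castHom_apply, hv2] at this
    exact absurd this (by decide)
  have h25 := h (ZMod.unitOfCoprime 5 ((Nat.Prime.coprime_iff_not_dvd Nat.prime_five).mpr h5))
  rw [ZMod.coe_unitOfCoprime] at h25
  rw [← ZMod.natCast_eq_zero_iff]
  push_cast
  linear_combination h25

lemma ZMod.not_eight_dvd_of_forall_isNilpotent_two_mul_eq_zero {n : ℕ} [NeZero n]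
    (h : ∀ x : ZMod n, IsNilpotent x → 2 * x = 0) : ¬ 8 ∣ n := by
  rintro ⟨k, rfl⟩
  have hk : k ≠ 0 := by rintro rfl; exact NeZero.ne (8 * 0) rfl
  have hx : IsNilpotent ((2 * k : ℕ) : ZMod (8 * k)) :=
    ⟨3, by rw [← Nat.cast_pow, ZMod.natCast_eq_zero_iff]; exact ⟨k ^ 2, by ring⟩⟩
  have h4k : ((4 * k : ℕ) : ZMod (8 * k)) = 0 := by
    have h2x := h _ hx
    push_cast at h2x ⊢
    linear_combination h2x
  rw [ZMod.natCast_eq_zero_iff] at h4k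
  have := Nat.le_of_dvd (by omega) h4k
  omega

theorem stmt_13 (n : ℕ) (hn : 0 < n) :
    (∀ u : (Polynomial (ZMod n))ˣ, (u : Polynomial (ZMod n)) ^ 2 = 1) ↔ n ∣ 12 := by
  have : NeZero n := ⟨hn.ne'⟩
  rw [Polynomial.forall_units_sq_eq_one_iff]
  constructor
  · rintro ⟨hunits, hnil⟩
    have h24 := ZMod.dvd_twentyFour_of_forall_units_sq_eq_one hunits
    have h8 := ZMod.not_eight_dvd_of_forall_isNilpotent_two_mul_eq_zero fun x hx ↦ (hnil x hx).2
    have hdivisors : ∀ m < 25, m ∣ 24 → ¬ 8 ∣ m → m ∣ 12 := by decide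
    exact hdivisors n (Nat.lt_succ_of_le (Nat.le_of_dvd (by norm_num) h24)) h24 h8
  · intro h
    have h4 := ZMod.pow_four_eq_sq_of_dvd_twelve h
    exact ⟨sq_eq_one_of_forall_pow_four_eq_sq h4,
      fun _ hx ↦ sq_eq_zero_and_two_mul_eq_zero_of_forall_pow_four_eq_sq h4 hx⟩
end

section
/- For any positive integers n and m, every unit of the multivariate polynomial ring MvPolynomial (Fin m) (ZMod n) is an involution if and only if n divides 12. -/
/-!
Every unit of `MvPolynomial σ R` is `c + η` with `c` a unit of `R` and `η` nilpotent. The elements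
`x` with `2 * x = 0` and `x ^ 2 = 0` form an ideal, so if all nilpotents of `R` lie in it, so do
all nilpotents of `MvPolynomial σ R`, and then `(c + η) ^ 2 = c ^ 2`. Hence all units of
`MvPolynomial σ R` square to `1` iff all units of `R` do and all nilpotents of `R` satisfy
`2 * a = a ^ 2 = 0`; the converse uses constants and the units `1 + a * X i`.

For `R = ZMod n` with `n ∣ 12` both properties follow from the identities `a ^ 4 = a ^ 2` and
`2 * a ^ 3 = 2 * a`, valid modulo `12`. Conversely `5 ^ 2 = 1` (or `2 ^ 2 = 1` modulo `5` when
`5 ∣ n`) forces `n ∣ 24`, and then `6` is nilpotent, so `2 * 6 = 0`.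
-/

open MvPolynomial

def sqZeroTwoTorsion (R : Type*) [CommRing R] : Ideal R where
  carrier := {x | 2 * x = 0 ∧ x ^ 2 = 0}
  zero_mem' := by simp
  add_mem' := by
    rintro x y ⟨hx2, hx⟩ ⟨hy2, hy⟩
    refine ⟨by rw [mul_add, hx2, hy2, add_zero], ?_⟩
    linear_combination hx + hy + y * hx2
  smul_mem' := by
    rintro c x ⟨hx2, hx⟩
    exact ⟨by rw [smul_eq_mul, mul_left_comm, hx2, mul_zero],
      by rw [smul_eq_mul, mul_pow, hx, mul_zero]⟩

theorem sq_eq_one_of_pow_four_eq_sq {M : Type*} [Monoid M] {a : M} (h : a ^ 4 = a ^ 2)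
    (ha : IsUnit a) : a ^ 2 = 1 :=
  (ha.pow 2).mul_left_cancel (by rw [← pow_add, mul_one]; exact h)

theorem sq_eq_zero_of_pow_four_eq_sq {M : Type*} [MonoidWithZero M] {a : M} (h : a ^ 4 = a ^ 2)
    (ha : IsNilpotent a) : a ^ 2 = 0 :=
  IsIdempotentElem.eq_zero_of_isNilpotent (by rw [IsIdempotentElem, ← pow_add]; exact h)
    (ha.pow_succ 1)

section MvPolynomial

variable {R σ : Type*} [CommRing R]

theorem add_sq_of_mem_sqZeroTwoTorsion (c : R) {x : R} (hx : x ∈ sqZeroTwoTorsion R) :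
    (c + x) ^ 2 = c ^ 2 := by
  linear_combination c * hx.1 + hx.2

theorem MvPolynomial.nilradical_le_sqZeroTwoTorsion (h : nilradical R ≤ sqZeroTwoTorsion R) :
    nilradical (MvPolynomial σ R) ≤ sqZeroTwoTorsion (MvPolynomial σ R) := by
  have hC : (nilradical R).map C ≤ sqZeroTwoTorsion (MvPolynomial σ R) :=
    Ideal.map_le_of_le_comap fun x hx ↦ by
      obtain ⟨h2, hsq⟩ := h hx
      exact ⟨by rw [← map_ofNat C, ← map_mul, h2, map_zero], by rw [← map_pow, hsq, map_zero]⟩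
  exact fun P hP ↦ hC (mem_map_C_iff.2 (isNilpotent_iff.1 hP))

theorem MvPolynomial.sq_eq_one_of_isUnit (hU : ∀ u : Rˣ, (u : R) ^ 2 = 1)
    (hN : nilradical R ≤ sqZeroTwoTorsion R) {P : MvPolynomial σ R} (hP : IsUnit P) :
    P ^ 2 = 1 := by
  classical
  obtain ⟨hc, hcoeff⟩ := isUnit_iff.1 hP
  have hnil : IsNilpotent (P - C (P.coeff 0)) := by
    refine isNilpotent_iff.2 fun i ↦ ?_
    rcases eq_or_ne i 0 with rfl | hi
    · simp
    · rw [coeff_sub, coeff_C, if_neg hi.symm, sub_zero]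
      exact hcoeff i hi
  calc P ^ 2 = (C (P.coeff 0) + (P - C (P.coeff 0))) ^ 2 := by rw [add_sub_cancel]
    _ = C (P.coeff 0 ^ 2) := by
      rw [add_sq_of_mem_sqZeroTwoTorsion _ (nilradical_le_sqZeroTwoTorsion hN hnil), map_pow]
    _ = 1 := by rw [show P.coeff 0 ^ 2 = 1 from hU hc.unit, map_one]

theorem units_sq_eq_one_of_mvPolynomial
    (h : ∀ u : (MvPolynomial σ R)ˣ, (u : MvPolynomial σ R) ^ 2 = 1) (u : Rˣ) :
    (u : R) ^ 2 = 1 :=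
  C_injective σ R <| by simpa using h (Units.map C.toMonoidHom u)

theorem nilradical_le_sqZeroTwoTorsion_of_mvPolynomial (i : σ)
    (h : ∀ u : (MvPolynomial σ R)ˣ, (u : MvPolynomial σ R) ^ 2 = 1) :
    nilradical R ≤ sqZeroTwoTorsion R := by
  classical
  intro a ha
  have hX : IsNilpotent (C a * X i : MvPolynomial σ R) :=
    (Commute.all _ _).isNilpotent_mul_right ((mem_nilradical.1 ha).map C)
  have h2 := h hX.isUnit_one_add.unit
  rw [IsUnit.unit_spec, C_mul_X_eq_monomial] at h2
  have key :
      monomial (Finsupp.single i 1) (2 * a) + monomial (Finsupp.single i 2) (a ^ 2) = 0 := by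
    rw [← C_mul_monomial, map_ofNat, show Finsupp.single i 2 = 2 • Finsupp.single i 1 by simp,
      ← monomial_pow]
    linear_combination h2
  have hne : Finsupp.single i 1 ≠ Finsupp.single i 2 :=
    (Finsupp.single_injective i).ne (by norm_num)
  constructor
  · simpa [coeff_monomial, hne.symm] using congr_arg (coeff (Finsupp.single i 1)) key
  · simpa [coeff_monomial, hne] using congr_arg (coeff (Finsupp.single i 2)) key

end MvPolynomial

namespace ZMod

variable {n : ℕ}

theorem pow_four_eq_sq_of_dvd_12 (h : n ∣ 12) (a : ZMod n) : a ^ 4 = a ^ 2 := by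
  obtain ⟨b, rfl⟩ := ringHom_surjective (castHom h (ZMod n)) a
  rw [← map_pow, ← map_pow]
  exact congrArg _ (by revert b; decide)

theorem two_mul_pow_three_of_dvd_12 (h : n ∣ 12) (a : ZMod n) : 2 * a ^ 3 = 2 * a := by
  obtain ⟨b, rfl⟩ := ringHom_surjective (castHom h (ZMod n)) a
  rw [← map_pow, ← map_ofNat (castHom h (ZMod n)) 2, ← map_mul, ← map_mul]
  exact congrArg _ (by revert b; decide)

theorem units_sq_eq_one_of_dvd_12 (h : n ∣ 12) (u : (ZMod n)ˣ) : (u : ZMod n) ^ 2 = 1 :=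
  sq_eq_one_of_pow_four_eq_sq (pow_four_eq_sq_of_dvd_12 h u) u.isUnit

theorem nilradical_le_sqZeroTwoTorsion (h : n ∣ 12) :
    nilradical (ZMod n) ≤ sqZeroTwoTorsion (ZMod n) := fun a ha ↦ by
  have ha2 := sq_eq_zero_of_pow_four_eq_sq (pow_four_eq_sq_of_dvd_12 h a) (mem_nilradical.1 ha)
  refine ⟨?_, ha2⟩
  linear_combination (two_mul_pow_three_of_dvd_12 h a).symm + 2 * a * ha2

theorem dvd_24_of_units_sq_eq_one (hn : n ≠ 0) (hU : ∀ u : (ZMod n)ˣ, (u : ZMod n) ^ 2 = 1) :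
    n ∣ 24 := by
  have : NeZero n := ⟨hn⟩
  by_cases h5 : 5 ∣ n
  · obtain ⟨u, hu⟩ := unitsMap_surjective h5 (unitOfCoprime 2 (by norm_num))
    have h2 : castHom h5 (ZMod 5) u = 2 := congrArg Units.val hu
    have := congrArg (castHom h5 (ZMod 5)) (hU u)
    rw [map_pow, map_one, h2] at this
    exact absurd this (by decide)
  · have := hU (unitOfCoprime 5 ((Nat.Prime.coprime_iff_not_dvd (by norm_num)).2 h5))
    rw [coe_unitOfCoprime] at this
    rw [← natCast_eq_zero_iff]
    push_cast
    linear_combination this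

theorem dvd_12_of_dvd_24 (h24 : n ∣ 24) (hN : nilradical (ZMod n) ≤ sqZeroTwoTorsion (ZMod n)) :
    n ∣ 12 := by
  have h6 : IsNilpotent (6 : ZMod n) := ⟨3, by
    rw [show (6 : ZMod n) ^ 3 = ((216 : ℕ) : ZMod n) by push_cast; ring, natCast_eq_zero_iff]
    exact h24.trans (by norm_num)⟩
  rw [← natCast_eq_zero_iff]
  push_cast
  linear_combination (hN (mem_nilradical.2 h6)).1

theorem mvPolynomial_units_sq_eq_one_iff {σ : Type*} [Nonempty σ] (hn : n ≠ 0) :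
    (∀ u : (MvPolynomial σ (ZMod n))ˣ, (u : MvPolynomial σ (ZMod n)) ^ 2 = 1) ↔ n ∣ 12 := by
  refine ⟨fun h ↦ ?_, fun h u ↦ ?_⟩
  · exact dvd_12_of_dvd_24 (dvd_24_of_units_sq_eq_one hn (units_sq_eq_one_of_mvPolynomial h))
      (nilradical_le_sqZeroTwoTorsion_of_mvPolynomial (Classical.arbitrary σ) h)
  · exact MvPolynomial.sq_eq_one_of_isUnit (units_sq_eq_one_of_dvd_12 h)
      (nilradical_le_sqZeroTwoTorsion h) u.isUnit

end ZMod

theorem stmt_14 (n m : ℕ) (hn : 0 < n) (hm : 0 < m) :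
    (∀ u : (MvPolynomial (Fin m) (ZMod n))ˣ,
      (u : MvPolynomial (Fin m) (ZMod n)) ^ 2 = 1) ↔ n ∣ 12 :=
  have : Nonempty (Fin m) := ⟨⟨0, hm⟩⟩
  ZMod.mvPolynomial_units_sq_eq_one_iff hn.ne'
end
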